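/- arXiv:math/0512530 — 4 statements merged into one kernel-verified Lean document; each statement's English description precedes it below -/
import Mathlib

section
/- In the ring CH*(B×C)[ξ]/(ξ² + αξ), for any constants a, b ∈ ℚ one has the identity ∫((ξ + aμ + bα)^{g+1}) = -(n(g+1)!/3)·a^{g-2}·(b³ - (b-1)³), where ∫ is the integration functional determined by: ξ^k terms reduce via ξ² = -αξ to ξ·(-α)^{k-1}, ξ·(degree-g class P) integrates to ∫_{B×C}(P), η² = 0, αη = 0, ημ^{g-1} = n(g-1)!, α²μ^{g-2} = -2n(g-2)!, α^k μ^{g-k} = 0 for k ≠ 2, and any top product of ξ-free classes is 0. -/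
open MvPolynomial

/-- Generators of the model of CH*(P̃): μ, α, η pulled back from B × C,
and ξ the tautological class of the ℙ¹-bundle. -/
noncomputable def mu : MvPolynomial (Fin 4) ℚ := X 0
noncomputable def al : MvPolynomial (Fin 4) ℚ := X 1
noncomputable def et : MvPolynomial (Fin 4) ℚ := X 2
noncomputable def xi : MvPolynomial (Fin 4) ℚ := X 3

/-- The computational trick (T): in CH*(B×C)[ξ]/(ξ² + αξ), for any a, b ∈ ℚ,
∫((ξ + aμ + bα)^{g+1}) = -(n(g+1)!/3)·a^{g-2}·(b³ - (b-1)³). -/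
theorem stmt_4 (g n : ℕ) (hg : 2 ≤ g) (hn : 0 < n)
    (J : MvPolynomial (Fin 4) ℚ →ₗ[ℚ] ℚ)
    (hrel_eta : ∀ p, J (et ^ 2 * p) = 0)
    (hrel_aleta : ∀ p, J (al * et * p) = 0)
    (hrel_xi : ∀ p, J (xi ^ 2 * p) = -J (al * xi * p))
    (h_free : ∀ a b c : ℕ, J (mu ^ a * al ^ b * et ^ c) = 0)
    (h_eta_mu : J (xi * (et * mu ^ (g - 1))) = n * Nat.factorial (g - 1))
    (h_al2 : J (xi * (al ^ 2 * mu ^ (g - 2))) = -2 * n * Nat.factorial (g - 2))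
    (h_alk : ∀ k : ℕ, k ≤ g → k ≠ 2 → J (xi * (al ^ k * mu ^ (g - k))) = 0) :
    ∀ a b : ℚ,
      J ((xi + C a * mu + C b * al) ^ (g + 1)) =
        -((n * Nat.factorial (g + 1) : ℚ) / 3) * a ^ (g - 2) * (b ^ 3 - (b - 1) ^ 3) := by
  obtain ⟨m, rfl⟩ : ∃ m, g = m + 2 := ⟨g - 2, by omega⟩
  intro a b
  -- basic scalar-pulling lemma
  have hJC : ∀ (r : ℚ) (p : MvPolynomial (Fin 4) ℚ), J (C r * p) = r * J p := by
    intro r p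
    rw [← smul_eq_C_mul, map_smul, smul_eq_mul]
  -- ξ-power reduction
  have hxipow : ∀ (k : ℕ) (p : MvPolynomial (Fin 4) ℚ),
      J (xi ^ (k + 1) * p) = (-1 : ℚ) ^ k * J (xi * (al ^ k * p)) := by
    intro k
    induction k with
    | zero => intro p; simp only [zero_add, pow_one, pow_zero, one_mul]
    | succ k ih =>
      intro p
      have h1 : xi ^ (k + 2) * p = xi ^ 2 * (xi ^ k * p) := by ring
      rw [h1, hrel_xi]
      have h2 : al * xi * (xi ^ k * p) = xi ^ (k + 1) * (al * p) := by ring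
      rw [h2, ih]
      have h3 : xi * (al ^ k * (al * p)) = xi * (al ^ (k + 1) * p) := by ring
      rw [h3]
      ring
  -- value of ξ·(monomial in α, μ)
  have hmono : ∀ t s : ℕ, t + s = m + 2 →
      J (xi * (al ^ t * mu ^ s)) =
        if t = 2 then -2 * (n : ℚ) * (Nat.factorial m : ℚ) else 0 := by
    intro t s hts
    by_cases ht : t = 2
    · subst ht
      have hs : s = m := by omega
      rw [if_pos rfl, hs]
      have h2 := h_al2
      have hmm : m + 2 - 2 = m := by omega
      rw [hmm] at h2
      exact h2
    · have h0 := h_alk t (by omega) ht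
      have hmm : m + 2 - t = s := by omega
      rw [hmm] at h0
      rw [if_neg ht, h0]
  -- ξ-free monomials integrate to 0
  have hfreeJ : ∀ i j : ℕ, J (mu ^ i * al ^ j) = 0 := by
    intro i j
    have := h_free i j 0
    simpa using this
  set c : MvPolynomial (Fin 4) ℚ := C a * mu + C b * al with hc
  -- per-term normal form in the binomial expansion of c^s
  have hterm : ∀ (t s j : ℕ),
      xi * (al ^ t * ((C a * mu) ^ j * (C b * al) ^ (s - j) *
        ((s.choose j : ℕ) : MvPolynomial (Fin 4) ℚ))) =
      C (a ^ j * b ^ (s - j) * (s.choose j : ℚ)) * (xi * (al ^ (t + (s - j)) * mu ^ j)) := by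
    intro t s j
    rw [← C_eq_coe_nat, mul_pow, mul_pow, ← C_pow, ← C_pow, C_mul, C_mul]
    ring
  -- the inner evaluation: J(ξ α^t c^s)
  have hinner : ∀ t s : ℕ, t + s = m + 2 →
      J (xi * (al ^ t * c ^ s)) =
        if t ≤ 2 then (s.choose m : ℚ) * a ^ m * b ^ (s - m) * (-2 * (n : ℚ) * (Nat.factorial m : ℚ))
        else 0 := by
    intro t s hts
    rw [hc, add_pow, Finset.mul_sum, Finset.mul_sum, map_sum]
    have hval : ∀ j ∈ Finset.range (s + 1),
        J (xi * (al ^ t * ((C a * mu) ^ j * (C b * al) ^ (s - j) *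
          ((s.choose j : ℕ) : MvPolynomial (Fin 4) ℚ)))) =
        a ^ j * b ^ (s - j) * (s.choose j : ℚ) *
          (if t + (s - j) = 2 then -2 * (n : ℚ) * (Nat.factorial m : ℚ) else 0) := by
      intro j hj
      rw [Finset.mem_range] at hj
      rw [hterm, hJC, hmono (t + (s - j)) j (by omega)]
    rw [Finset.sum_congr rfl hval]
    by_cases ht : t ≤ 2
    · rw [if_pos ht]
      rw [Finset.sum_eq_single_of_mem m (by rw [Finset.mem_range]; omega)]
      · rw [if_pos (by omega)]
        ring
      · intro j hj hjm
        rw [Finset.mem_range] at hj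
        rw [if_neg (by omega), mul_zero]
    · rw [if_neg ht]
      apply Finset.sum_eq_zero
      intro j hj
      rw [Finset.mem_range] at hj
      rw [if_neg (by omega), mul_zero]
  -- ξ-free powers of c integrate to 0
  have hfreec : ∀ M : ℕ, J (c ^ M) = 0 := by
    intro M
    rw [hc, add_pow, map_sum]
    apply Finset.sum_eq_zero
    intro j hj
    have h1 : (C a * mu) ^ j * (C b * al) ^ (M - j) *
        ((M.choose j : ℕ) : MvPolynomial (Fin 4) ℚ) =
        C (a ^ j * b ^ (M - j) * (M.choose j : ℚ)) * (mu ^ j * al ^ (M - j)) := by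
      rw [← C_eq_coe_nat, mul_pow, mul_pow, ← C_pow, ← C_pow, C_mul, C_mul]
      ring
    rw [h1, hJC, hfreeJ, mul_zero]
  -- the outer expansion
  have hgoal : (xi + C a * mu + C b * al) = xi + c := by rw [hc]; ring
  rw [hgoal, add_pow, map_sum]
  -- the generic term of the outer sum
  have hF : ∀ k : ℕ, k < m + 4 →
      J (xi ^ k * c ^ (m + 3 - k) * (((m + 3).choose k : ℕ) : MvPolynomial (Fin 4) ℚ)) =
      (((m + 3).choose k : ℚ)) *
        (if k = 0 then 0 else (-1 : ℚ) ^ (k - 1) *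
          (if k - 1 ≤ 2 then ((m + 3 - k).choose m : ℚ) * a ^ m * b ^ (m + 3 - k - m) *
            (-2 * (n : ℚ) * (Nat.factorial m : ℚ)) else 0)) := by
    intro k hk
    have h1 : xi ^ k * c ^ (m + 3 - k) * (((m + 3).choose k : ℕ) : MvPolynomial (Fin 4) ℚ) =
        C (((m + 3).choose k : ℚ)) * (xi ^ k * c ^ (m + 3 - k)) := by
      rw [← C_eq_coe_nat]
      push_cast
      ring
    rw [h1, hJC]
    congr 1
    match k with
    | 0 =>
      simp only [if_pos rfl, pow_zero, one_mul]
      exact hfreec (m + 3)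
    | k + 1 =>
      have h2 : m + 3 - (k + 1) = m + 2 - k := by omega
      rw [if_neg (Nat.succ_ne_zero k), hxipow k, h2, hinner k (m + 2 - k) (by omega)]
      simp only [Nat.add_sub_cancel]
  rw [Finset.sum_congr rfl (fun k hk => hF k (Finset.mem_range.mp hk))]
  -- only k = 1, 2, 3 contribute
  rw [← Finset.sum_subset (show ({1, 2, 3} : Finset ℕ) ⊆ Finset.range (m + 4) by
        intro x hx
        fin_cases hx <;> simp <;> omega)]
  · -- evaluate the three terms
    rw [Finset.sum_insert (by norm_num), Finset.sum_insert (by norm_num),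
      Finset.sum_singleton]
    norm_num
    rw [show m + 3 - 2 = m + 1 from by omega, show m + 1 - m = 1 from by omega]
    have hc2 : ((m + 3).choose 2 : ℚ) = ((m + 3) * (m + 2) : ℚ) / 2 := by
      rw [Nat.cast_choose ℚ (by omega : 2 ≤ m + 3)]
      have : m + 3 - 2 = m + 1 := by omega
      rw [this]
      rw [show Nat.factorial (m + 3) = (m + 3) * ((m + 2) * Nat.factorial (m + 1)) by
        rw [Nat.factorial_succ, Nat.factorial_succ]]
      have hne : (Nat.factorial (m + 1) : ℚ) ≠ 0 := by
        exact_mod_cast Nat.factorial_ne_zero (m + 1)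
      push_cast
      field_simp
      ring
    have hc3 : ((m + 3).choose 3 : ℚ) = ((m + 3) * (m + 2) * (m + 1) : ℚ) / 6 := by
      rw [Nat.cast_choose ℚ (by omega : 3 ≤ m + 3)]
      have : m + 3 - 3 = m := by omega
      rw [this]
      rw [show Nat.factorial (m + 3) = (m + 3) * ((m + 2) * ((m + 1) * Nat.factorial m)) by
        rw [Nat.factorial_succ, Nat.factorial_succ, Nat.factorial_succ]]
      have hne : (Nat.factorial m : ℚ) ≠ 0 := by
        exact_mod_cast Nat.factorial_ne_zero m
      push_cast [Nat.factorial]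
      field_simp
    have hcm : ((m + 2).choose m : ℚ) = ((m + 2) * (m + 1) : ℚ) / 2 := by
      rw [Nat.cast_choose ℚ (by omega : m ≤ m + 2)]
      have : m + 2 - m = 2 := by omega
      rw [this]
      rw [show Nat.factorial (m + 2) = (m + 2) * ((m + 1) * Nat.factorial m) by
        rw [Nat.factorial_succ, Nat.factorial_succ]]
      have hne : (Nat.factorial m : ℚ) ≠ 0 := by
        exact_mod_cast Nat.factorial_ne_zero m
      push_cast [Nat.factorial]
      field_simp
    have hcm1 : ((m + 1).choose m : ℚ) = (m + 1 : ℚ) := by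
      rw [Nat.choose_succ_self_right]; push_cast; ring
    have hcm0 : ((m).choose m : ℚ) = 1 := by rw [Nat.choose_self]; norm_num
    have hfact : (Nat.factorial (m + 2 + 1) : ℚ) =
        ((m + 3) * (m + 2) * (m + 1) : ℚ) * (Nat.factorial m : ℚ) := by
      rw [show Nat.factorial (m + 2 + 1) = (m + 3) * ((m + 2) * ((m + 1) * Nat.factorial m)) by
        rw [Nat.factorial_succ, Nat.factorial_succ, Nat.factorial_succ]]
      push_cast
      ring
    rw [hc2, hc3, hcm, hcm1, hfact]
    ring
  · intro k hk hk3
    rw [Finset.mem_range] at hk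
    simp only [Finset.mem_insert, Finset.mem_singleton] at hk3
    push_neg at hk3
    obtain ⟨h1, h2, h3⟩ := hk3
    by_cases hk0 : k = 0
    · rw [if_pos hk0, mul_zero]
    · rw [if_neg hk0, if_neg (by omega : ¬ k - 1 ≤ 2), mul_zero, mul_zero]
end

section
/- With D = ξ + μ + α/2 + η/4 in the model ring ℚ[μ,α,η,ξ]/(η², αη, ξ² + αξ), one has ∫(D^{g+1}) = n(g+1)!/6, where ∫ is defined by: ξ-free top monomials integrate to 0, ∫(ξημ^{g-1}) = n(g-1)!, ∫(ξα²μ^{g-2}) = -2n(g-2)!, ∫(ξα^kμ^{g-k}) = 0 for k ≠ 2, ∫(ξηα·anything) = 0, and higher powers of ξ reduce via ξ² = -αξ. -/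
open MvPolynomial

private lemma key (J : MvPolynomial (Fin 4) ℚ →ₗ[ℚ] ℚ) (c : ℚ) (k : ℕ)
    (p q : MvPolynomial (Fin 4) ℚ)
    (hq : q = C c * (k : MvPolynomial (Fin 4) ℚ) * p) :
    J q = c * k * J p := by
  have hc : (C (c * (k : ℚ)) : MvPolynomial (Fin 4) ℚ)
      = C c * (k : MvPolynomial (Fin 4) ℚ) := by rw [map_mul, map_natCast]
  rw [hq, ← hc, ← smul_eq_C_mul, map_smul, smul_eq_mul]

private lemma key2 (J : MvPolynomial (Fin 4) ℚ →ₗ[ℚ] ℚ) (k : ℕ)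
    (p q : MvPolynomial (Fin 4) ℚ)
    (hq : q = (k : MvPolynomial (Fin 4) ℚ) * p) :
    J q = k * J p := by
  have := key J 1 k p q (by rw [hq, map_one, one_mul])
  simpa using this

private lemma Lxi (J : MvPolynomial (Fin 4) ℚ →ₗ[ℚ] ℚ)
    (hrel_xi : ∀ p, J (xi ^ 2 * p) = -J (al * xi * p)) :
    ∀ (i : ℕ) (q), J (xi ^ (i + 1) * q) = (-1 : ℚ) ^ i * J (al ^ i * (xi * q)) := by
  intro i
  induction i with
  | zero => intro q; simp
  | succ m ih =>
    intro q
    rw [show xi ^ (m + 1 + 1) * q = xi ^ 2 * (xi ^ m * q) by ring, hrel_xi,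
        show al * xi * (xi ^ m * q) = xi ^ (m + 1) * (al * q) by ring, ih,
        show al ^ m * (xi * (al * q)) = al ^ (m + 1) * (xi * q) by ring]
    ring

private lemma Letaxi (J : MvPolynomial (Fin 4) ℚ →ₗ[ℚ] ℚ)
    (hrel_aleta : ∀ p, J (al * et * p) = 0)
    (hrel_xi : ∀ p, J (xi ^ 2 * p) = -J (al * xi * p))
    (m : ℕ) (q : MvPolynomial (Fin 4) ℚ) :
    J (xi ^ (m + 2) * (et * q)) = 0 := by
  rw [show xi ^ (m + 2) * (et * q) = xi ^ 2 * (xi ^ m * (et * q)) by ring, hrel_xi,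
      show al * xi * (xi ^ m * (et * q)) = al * et * (xi ^ (m + 1) * q) by ring,
      hrel_aleta, neg_zero]

/-- With D = ξ + μ + α/2 + η/4 the class of the universal semiabelian theta
divisor, ∫(D^{g+1}) = n(g+1)!/6: the boundary coefficient of the
Andreotti–Mayer divisor. -/
theorem stmt_8 (g n : ℕ) (hg : 2 ≤ g) (hn : 0 < n)
    (J : MvPolynomial (Fin 4) ℚ →ₗ[ℚ] ℚ)
    (hrel_eta : ∀ p, J (et ^ 2 * p) = 0)
    (hrel_aleta : ∀ p, J (al * et * p) = 0)
    (hrel_xi : ∀ p, J (xi ^ 2 * p) = -J (al * xi * p))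
    (h_free : ∀ a b c : ℕ, J (mu ^ a * al ^ b * et ^ c) = 0)
    (h_eta_mu : J (xi * (et * mu ^ (g - 1))) = n * Nat.factorial (g - 1))
    (h_al2 : J (xi * (al ^ 2 * mu ^ (g - 2))) = -2 * n * Nat.factorial (g - 2))
    (h_alk : ∀ k : ℕ, k ≤ g → k ≠ 2 → J (xi * (al ^ k * mu ^ (g - k))) = 0) :
    J ((xi + mu + C (1 / 2 : ℚ) * al + C (1 / 4 : ℚ) * et) ^ (g + 1)) =
      n * Nat.factorial (g + 1) / 6 := by
  obtain ⟨G, rfl⟩ : ∃ G, g = G + 2 := ⟨g - 2, by omega⟩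
  simp only [show G + 2 - 1 = G + 1 from by omega,
    show G + 2 - 2 = G from by omega] at h_eta_mu h_al2
  -- vanishing of ξ-monomials except α-power 2
  have Lmono0 : ∀ a b : ℕ, a + b = G + 2 → a ≠ 2 →
      J (xi * (al ^ a * mu ^ b)) = 0 := by
    intro a b hab ha
    have hb : b = G + 2 - a := by omega
    rw [hb]
    exact h_alk a (by omega) ha
  -- ∫ of ξ-free powers of V = μ + α/2
  have Q : ∀ r : ℕ, J ((mu + C (1 / 2 : ℚ) * al) ^ r) = 0 := by
    intro r
    rw [add_pow, map_sum]
    apply Finset.sum_eq_zero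
    intro j hj
    rw [mul_pow, ← map_pow]
    refine (key J _ _ (mu ^ j * al ^ (r - j) * et ^ 0) _ (by ring)).trans ?_
    rw [h_free, mul_zero]
  -- key computation: J(ξ α^m V^r)
  have P : ∀ m r : ℕ, m + r = G + 2 →
      J (xi * (al ^ m * (mu + C (1 / 2 : ℚ) * al) ^ r)) =
        (if G ≤ r then ((1 / 2 : ℚ)) ^ (r - G) * (r.choose G) *
          (-2 * n * Nat.factorial G) else 0) := by
    intro m r hmr
    rw [add_pow, Finset.mul_sum, Finset.mul_sum, map_sum]
    have hterm : ∀ j ∈ Finset.range (r + 1),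
        J (xi * (al ^ m * (mu ^ j * (C (1 / 2 : ℚ) * al) ^ (r - j) * ((r.choose j : MvPolynomial (Fin 4) ℚ))))) =
        (1 / 2 : ℚ) ^ (r - j) * (r.choose j) * J (xi * (al ^ (G + 2 - j) * mu ^ j)) := by
      intro j hj
      have hj' : j ≤ r := by have := Finset.mem_range.mp hj; omega
      rw [mul_pow, ← map_pow]
      exact key J _ _ _ _
        (by rw [show G + 2 - j = m + (r - j) from by omega, pow_add]; ring)
    rw [Finset.sum_congr rfl hterm]
    by_cases hGr : G ≤ r
    · rw [if_pos hGr, Finset.sum_eq_single G]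
      · rw [show G + 2 - G = 2 from by omega, h_al2]
      · intro j hj hne
        have hj' : j ≤ r := by have := Finset.mem_range.mp hj; omega
        rw [Lmono0 (G + 2 - j) j (by omega) (by omega), mul_zero]
      · intro h
        exact absurd (Finset.mem_range.mpr (by omega)) h
    · rw [if_neg hGr]
      apply Finset.sum_eq_zero
      intro j hj
      have hj' : j ≤ r := by have := Finset.mem_range.mp hj; omega
      rw [Lmono0 (G + 2 - j) j (by omega) (by omega), mul_zero]
  -- Step B : J(η T^{G+2}) with T = ξ + μ + α/2
  have StepB : J (et * (xi + mu + C (1 / 2 : ℚ) * al) ^ (G + 2)) =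
      ((G + 2 : ℚ)) * (n * Nat.factorial (G + 1)) := by
    rw [show (xi + mu + C (1 / 2 : ℚ) * al) = ((xi + mu) + C (1 / 2 : ℚ) * al) by ring,
      add_pow, Finset.mul_sum, map_sum, Finset.sum_eq_single (G + 2)]
    · simp only [Nat.sub_self, pow_zero, Nat.choose_self, Nat.cast_one, mul_one]
      rw [add_pow, Finset.mul_sum, map_sum, Finset.sum_eq_single 1]
      · rw [show G + 2 - 1 = G + 1 from by omega]
        rw [key2 J ((G + 2).choose 1) (xi * (et * mu ^ (G + 1))) _ (by ring), h_eta_mu]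
        simp [Nat.choose_one_right]
      · intro i hi hne
        have hi' : i ≤ G + 2 := by have := Finset.mem_range.mp hi; omega
        match i, hne with
        | 0, _ =>
          rw [key2 J ((G + 2).choose 0) (mu ^ (G + 2 - 0) * al ^ 0 * et ^ 1) _ (by ring),
            h_free, mul_zero]
        | (m + 2), _ =>
          rw [key2 J ((G + 2).choose (m + 2))
            (xi ^ (m + 2) * (et * mu ^ (G + 2 - (m + 2)))) _ (by ring),
            Letaxi J hrel_aleta hrel_xi, mul_zero]
        | 1, hne => exact absurd rfl hne
      · intro h
        exact absurd (Finset.mem_range.mpr (by omega)) h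
    · intro k hk hne
      have hk' : k ≤ G + 1 := by have := Finset.mem_range.mp hk; omega
      obtain ⟨m, hm⟩ : ∃ m, G + 2 - k = m + 1 := ⟨G + 1 - k, by omega⟩
      rw [hm, mul_pow, ← map_pow]
      refine (key J _ _ (al * et * ((xi + mu) ^ k * al ^ m)) _ (by ring)).trans ?_
      rw [hrel_aleta, mul_zero]
    · intro h
      exact absurd (Finset.mem_range.mpr (by omega)) h
  -- Step C : J(T^{G+3})
  have StepC : J ((xi + mu + C (1 / 2 : ℚ) * al) ^ (G + 3)) =
      -((G + 3 : ℚ) * (G + 2) * (G + 1)) * n * Nat.factorial G / 12 := by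
    rw [show (xi + mu + C (1 / 2 : ℚ) * al) = (xi + (mu + C (1 / 2 : ℚ) * al)) by ring,
      add_pow, map_sum]
    have hvan : ∀ i ∈ Finset.range (G + 4), i ∉ ({1, 2, 3} : Finset ℕ) →
        J (xi ^ i * (mu + C (1 / 2 : ℚ) * al) ^ (G + 3 - i) *
          (((G + 3).choose i : MvPolynomial (Fin 4) ℚ))) = 0 := by
      intro i hi hni
      have hi' : i ≤ G + 3 := by have := Finset.mem_range.mp hi; omega
      simp only [Finset.mem_insert, Finset.mem_singleton] at hni
      push_neg at hni
      match i, hni with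
      | 0, _ =>
        rw [key2 J ((G + 3).choose 0) ((mu + C (1 / 2 : ℚ) * al) ^ (G + 3 - 0)) _ (by ring),
          Q, mul_zero]
      | (m + 1), hni =>
        rw [key2 J ((G + 3).choose (m + 1))
          (xi ^ (m + 1) * (mu + C (1 / 2 : ℚ) * al) ^ (G + 3 - (m + 1))) _ (by ring),
          Lxi J hrel_xi,
          show al ^ m * (xi * (mu + C (1 / 2 : ℚ) * al) ^ (G + 3 - (m + 1)))
            = xi * (al ^ m * (mu + C (1 / 2 : ℚ) * al) ^ (G + 3 - (m + 1))) by ring,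
          P m (G + 3 - (m + 1)) (by omega), if_neg (by omega)]
        ring
    rw [← Finset.sum_subset (by intro x hx; simp only [Finset.mem_insert,
        Finset.mem_singleton] at hx; rcases hx with rfl | rfl | rfl <;>
        exact Finset.mem_range.mpr (by omega)) hvan]
    rw [show ({1, 2, 3} : Finset ℕ) = {1, 2, 3} from rfl]
    rw [Finset.sum_insert (by simp), Finset.sum_insert (by simp), Finset.sum_singleton]
    have hf : ∀ i, 1 ≤ i → i ≤ 3 →
        J (xi ^ i * (mu + C (1 / 2 : ℚ) * al) ^ (G + 3 - i) *
          (((G + 3).choose i : MvPolynomial (Fin 4) ℚ))) =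
        ((G + 3).choose i : ℚ) * ((-1 : ℚ) ^ (i - 1) *
          ((1 / 2 : ℚ) ^ (3 - i) * ((G + 3 - i).choose G : ℚ) *
            (-2 * n * Nat.factorial G))) := by
      intro i h1 h3
      obtain ⟨m, rfl⟩ : ∃ m, i = m + 1 := ⟨i - 1, by omega⟩
      rw [key2 J ((G + 3).choose (m + 1))
        (xi ^ (m + 1) * (mu + C (1 / 2 : ℚ) * al) ^ (G + 3 - (m + 1))) _ (by ring),
        Lxi J hrel_xi,
        show al ^ m * (xi * (mu + C (1 / 2 : ℚ) * al) ^ (G + 3 - (m + 1)))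
          = xi * (al ^ m * (mu + C (1 / 2 : ℚ) * al) ^ (G + 3 - (m + 1))) by ring,
        P m (G + 3 - (m + 1)) (by omega), if_pos (by omega),
        show G + 3 - (m + 1) - G = 3 - (m + 1) from by omega,
        show m + 1 - 1 = m from by omega]
    rw [hf 1 (by omega) (by omega), hf 2 (by omega) (by omega), hf 3 (by omega) (by omega)]
    rw [show G + 3 - 1 = G + 2 from by omega, show G + 3 - 2 = G + 1 from by omega,
      show G + 3 - 3 = G from by omega]
    have c1 : ((G + 3).choose 1 : ℚ) = (G + 3 : ℚ) := by
      rw [Nat.choose_one_right]; push_cast; ring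
    have c2 : ((G + 3).choose 2 : ℚ) = (G + 3 : ℚ) * (G + 2) / 2 := by
      rw [Nat.cast_choose ℚ (by omega : 2 ≤ G + 3),
        show G + 3 - 2 = G + 1 from by omega,
        show Nat.factorial (G + 3) = (G + 3) * ((G + 2) * Nat.factorial (G + 1)) from by
          simp [Nat.factorial_succ],
        show (Nat.factorial 2 : ℚ) = 2 from by norm_num [Nat.factorial]]
      have : (Nat.factorial (G + 1) : ℚ) ≠ 0 := by
        exact_mod_cast Nat.factorial_ne_zero (G + 1)
      push_cast
      field_simp
    have c3 : ((G + 3).choose 3 : ℚ) = (G + 3 : ℚ) * (G + 2) * (G + 1) / 6 := by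
      rw [Nat.cast_choose ℚ (by omega : 3 ≤ G + 3),
        show G + 3 - 3 = G from by omega,
        show Nat.factorial (G + 3)
          = (G + 3) * ((G + 2) * ((G + 1) * Nat.factorial G)) from by
          simp [Nat.factorial_succ],
        show (Nat.factorial 3 : ℚ) = 6 from by norm_num [Nat.factorial]]
      have : (Nat.factorial G : ℚ) ≠ 0 := by
        exact_mod_cast Nat.factorial_ne_zero G
      push_cast
      field_simp
    have c4 : (((G + 2)).choose G : ℚ) = (G + 2 : ℚ) * (G + 1) / 2 := by
      rw [Nat.cast_choose ℚ (by omega : G ≤ G + 2),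
        show G + 2 - G = 2 from by omega,
        show Nat.factorial (G + 2) = (G + 2) * ((G + 1) * Nat.factorial G) from by
          simp [Nat.factorial_succ],
        show (Nat.factorial 2 : ℚ) = 2 from by norm_num [Nat.factorial]]
      have : (Nat.factorial G : ℚ) ≠ 0 := by
        exact_mod_cast Nat.factorial_ne_zero G
      push_cast
      field_simp
    have c5 : (((G + 1)).choose G : ℚ) = (G + 1 : ℚ) := by
      rw [Nat.choose_succ_self_right]; push_cast; ring
    have c6 : ((G).choose G : ℚ) = 1 := by rw [Nat.choose_self]; norm_num
    rw [c1, c2, c3, c4, c5, c6]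
    ring
  -- assemble
  rw [show G + 2 + 1 = G + 3 from by omega, add_pow, map_sum]
  have hvan : ∀ k ∈ Finset.range (G + 4), k ∉ ({G + 2, G + 3} : Finset ℕ) →
      J ((xi + mu + C (1 / 2 : ℚ) * al) ^ k * (C (1 / 4 : ℚ) * et) ^ (G + 3 - k) *
        (((G + 3).choose k : MvPolynomial (Fin 4) ℚ))) = 0 := by
    intro k hk hnk
    have hk' : k ≤ G + 3 := by have := Finset.mem_range.mp hk; omega
    simp only [Finset.mem_insert, Finset.mem_singleton] at hnk
    push_neg at hnk
    obtain ⟨m, hm⟩ : ∃ m, G + 3 - k = m + 2 := ⟨G + 1 - k, by omega⟩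
    rw [hm, mul_pow, ← map_pow]
    refine (key J ((1 / 4 : ℚ) ^ (m + 2)) ((G + 3).choose k)
      (et ^ 2 * ((xi + mu + C (1 / 2 : ℚ) * al) ^ k * et ^ m)) _ (by ring)).trans ?_
    rw [hrel_eta, mul_zero]
  rw [← Finset.sum_subset (by intro x hx; simp only [Finset.mem_insert,
      Finset.mem_singleton] at hx; rcases hx with rfl | rfl <;>
      exact Finset.mem_range.mpr (by omega)) hvan]
  rw [Finset.sum_insert (by simp), Finset.sum_singleton]
  have hA : J ((xi + mu + C (1 / 2 : ℚ) * al) ^ (G + 3) *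
      (C (1 / 4 : ℚ) * et) ^ (G + 3 - (G + 3)) *
      (((G + 3).choose (G + 3) : MvPolynomial (Fin 4) ℚ))) =
      J ((xi + mu + C (1 / 2 : ℚ) * al) ^ (G + 3)) := by
    simp [Nat.sub_self]
  have hB : J ((xi + mu + C (1 / 2 : ℚ) * al) ^ (G + 2) *
      (C (1 / 4 : ℚ) * et) ^ (G + 3 - (G + 2)) *
      (((G + 3).choose (G + 2) : MvPolynomial (Fin 4) ℚ))) =
      (1 / 4 : ℚ) * ((G + 3).choose (G + 2)) *
        J (et * (xi + mu + C (1 / 2 : ℚ) * al) ^ (G + 2)) := by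
    rw [show G + 3 - (G + 2) = 1 from by omega]
    exact key J _ _ _ _ (by ring)
  rw [hA, hB, StepB, StepC, show (G + 3).choose (G + 2) = G + 3 from
    Nat.choose_succ_self_right (G + 2)]
  have hfac : (Nat.factorial (G + 3) : ℚ)
      = (G + 3) * ((G + 2) * ((G + 1) * Nat.factorial G)) := by
    push_cast [Nat.factorial_succ]; ring
  have hfac1 : (Nat.factorial (G + 1) : ℚ) = (G + 1) * Nat.factorial G := by
    push_cast [Nat.factorial_succ]; ring
  rw [hfac, hfac1]
  push_cast
  ring
end

section
/- With D = ξ + mμ + (m/2)α + (m/4)η in the model ring ℚ[μ,α,η,ξ]/(η², αη, ξ² + mαξ) (where the Poincaré-bundle class is α' = mα), and integration rules ∫(ξημ^{g-1}) = n(g-1)!, ∫(ξα²μ^{g-2}) = -2n(g-2)!, all other ξα^kμ^{g-k} ↦ 0, ξ-free classes ↦ 0, one has ∫(D^{g+1}) = m^g·n(g+1)!/6; summing over the m components, the total ramification is m^{g+1}·n(g+1)!/6. -/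
open MvPolynomial Finset

noncomputable def Sm (m : ℚ) : MvPolynomial (Fin 4) ℚ :=
  C m * mu + C (m / 2) * al + C (m / 4) * et

noncomputable def Vval (g n : ℕ) (m : ℚ) (e d j : ℕ) : ℚ :=
  if d = 0 then
    if e = 0 then n * m ^ j * j * ((g : ℚ) - j) * (Nat.factorial (g - 2)) / 4
    else if e = 1 then -(n * m ^ j * j * (Nat.factorial (g - 2)))
    else if e = 2 then -2 * n * m ^ j * (Nat.factorial (g - 2))
    else 0
  else if d = 1 ∧ e = 0 then n * m ^ j * (Nat.factorial (g - 1))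
  else 0

lemma free_lemma (m : ℚ) (J : MvPolynomial (Fin 4) ℚ →ₗ[ℚ] ℚ)
    (h_free : ∀ a b c : ℕ, J (mu ^ a * al ^ b * et ^ c) = 0) :
    ∀ j e d b : ℕ, J (al ^ e * et ^ d * mu ^ b * (Sm m) ^ j) = 0 := by
  intro j
  induction j with
  | zero =>
    intro e d b
    rw [show al ^ e * et ^ d * mu ^ b * (Sm m) ^ 0 = mu ^ b * al ^ e * et ^ d by ring]
    exact h_free b e d
  | succ j ih =>
    intro e d b
    rw [show al ^ e * et ^ d * mu ^ b * (Sm m) ^ (j + 1)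
        = m • (al ^ e * et ^ d * mu ^ (b + 1) * (Sm m) ^ j)
        + (m / 2) • (al ^ (e + 1) * et ^ d * mu ^ b * (Sm m) ^ j)
        + (m / 4) • (al ^ e * et ^ (d + 1) * mu ^ b * (Sm m) ^ j) by
      simp only [smul_eq_C_mul, Sm, pow_succ]; ring]
    rw [map_add, map_add, map_smul, map_smul, map_smul, ih e d (b + 1), ih (e + 1) d b,
      ih e (d + 1) b]
    simp

lemma xi_pow (m : ℚ) (J : MvPolynomial (Fin 4) ℚ →ₗ[ℚ] ℚ)
    (hrel_xi : ∀ p, J (xi ^ 2 * p) = -m * J (al * xi * p)) :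
    ∀ (k : ℕ) (p), J (xi ^ (k + 1) * p) = (-m) ^ k * J (al ^ k * (xi * p)) := by
  intro k
  induction k with
  | zero => intro p; simp
  | succ k ih =>
    intro p
    rw [show xi ^ (k + 1 + 1) * p = xi ^ (k + 1) * (xi * p) by ring, ih]
    rw [show al ^ k * (xi * (xi * p)) = xi ^ 2 * (al ^ k * p) by ring, hrel_xi]
    rw [show al * xi * (al ^ k * p) = al ^ (k + 1) * (xi * p) by ring]
    ring

lemma main_lemma (g n : ℕ) (m : ℚ) (hg : 2 ≤ g)
    (J : MvPolynomial (Fin 4) ℚ →ₗ[ℚ] ℚ)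
    (hrel_eta : ∀ p, J (et ^ 2 * p) = 0)
    (hrel_aleta : ∀ p, J (al * et * p) = 0)
    (h_eta_mu : J (xi * (et * mu ^ (g - 1))) = n * Nat.factorial (g - 1))
    (h_al2 : J (xi * (al ^ 2 * mu ^ (g - 2))) = -2 * n * Nat.factorial (g - 2))
    (h_alk : ∀ k : ℕ, k ≤ g → k ≠ 2 → J (xi * (al ^ k * mu ^ (g - k))) = 0) :
    ∀ j e d b : ℕ, e + d + b + j = g →
      J (xi * (al ^ e * et ^ d * mu ^ b) * (Sm m) ^ j) = Vval g n m e d j := by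
  intro j
  induction j with
  | zero =>
    intro e d b h
    rcases d with _ | _ | d
    · -- d = 0
      have hb : b = g - e := by omega
      have he : e ≤ g := by omega
      subst hb
      rcases eq_or_ne e 2 with rfl | he2
      · rw [show xi * (al ^ 2 * et ^ 0 * mu ^ (g - 2)) * (Sm m) ^ 0
            = xi * (al ^ 2 * mu ^ (g - 2)) by ring, h_al2]
        simp [Vval]
      · rw [show xi * (al ^ e * et ^ 0 * mu ^ (g - e)) * (Sm m) ^ 0
            = xi * (al ^ e * mu ^ (g - e)) by ring, h_alk e he he2]
        rcases e with _ | _ | _ | e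
        · simp [Vval]
        · simp [Vval]
        · omega
        · simp [Vval]
    · -- d = 1
      rcases e with _ | e
      · have hb : b = g - 1 := by omega
        subst hb
        rw [show xi * (al ^ 0 * et ^ 1 * mu ^ (g - 1)) * (Sm m) ^ 0
            = xi * (et * mu ^ (g - 1)) by ring, h_eta_mu]
        simp [Vval]
      · rw [show xi * (al ^ (e + 1) * et ^ 1 * mu ^ b) * (Sm m) ^ 0
            = al * et * (xi * al ^ e * mu ^ b) by ring, hrel_aleta]
        simp [Vval]
    · -- d ≥ 2
      rw [show xi * (al ^ e * et ^ (d + 1 + 1) * mu ^ b) * (Sm m) ^ 0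
          = et ^ 2 * (xi * al ^ e * et ^ d * mu ^ b) by ring, hrel_eta]
      simp [Vval]
  | succ j ih =>
    intro e d b h
    rw [show xi * (al ^ e * et ^ d * mu ^ b) * (Sm m) ^ (j + 1)
        = m • (xi * (al ^ e * et ^ d * mu ^ (b + 1)) * (Sm m) ^ j)
        + (m / 2) • (xi * (al ^ (e + 1) * et ^ d * mu ^ b) * (Sm m) ^ j)
        + (m / 4) • (xi * (al ^ e * et ^ (d + 1) * mu ^ b) * (Sm m) ^ j) by
      simp only [smul_eq_C_mul, Sm, pow_succ]; ring]
    rw [map_add, map_add, map_smul, map_smul, map_smul,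
      ih e d (b + 1) (by omega), ih (e + 1) d b (by omega), ih e (d + 1) b (by omega)]
    have hfac : (Nat.factorial (g - 1) : ℚ) = ((g : ℚ) - 1) * (Nat.factorial (g - 2)) := by
      have h1 : g - 1 = (g - 2) + 1 := by omega
      rw [h1, Nat.factorial_succ]
      have h2 : ((g - 2 : ℕ) : ℚ) = (g : ℚ) - 2 := by
        have : (2 : ℕ) ≤ g := hg
        push_cast [this]
        ring
      push_cast [h2]
      ring
    rcases d with _ | _ | d <;> rcases e with _ | _ | _ | e <;>
      simp only [Vval, smul_eq_mul] <;> norm_num [hfac] <;> push_cast <;> ring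

/-- Level-m analog of the Andreotti–Mayer boundary computation: with
D = ξ + mμ + (m/2)α + (m/4)η in the model ring with ξ² = -mαξ (the
Poincaré-bundle class is α' = mα) and the standard integration rules, one has
∫(D^{g+1}) = m^g·n(g+1)!/6; summing over the m components of the level-m
semiabelian variety the total ramification is m^{g+1}·n(g+1)!/6. -/
theorem stmt_12 (g n m : ℕ) (hg : 2 ≤ g) (hn : 0 < n) (hm : 0 < m)
    (J : MvPolynomial (Fin 4) ℚ →ₗ[ℚ] ℚ)
    (hrel_eta : ∀ p, J (et ^ 2 * p) = 0)
    (hrel_aleta : ∀ p, J (al * et * p) = 0)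
    (hrel_xi : ∀ p, J (xi ^ 2 * p) = -(m : ℚ) * J (al * xi * p))
    (h_free : ∀ a b c : ℕ, J (mu ^ a * al ^ b * et ^ c) = 0)
    (h_eta_mu : J (xi * (et * mu ^ (g - 1))) = n * Nat.factorial (g - 1))
    (h_al2 : J (xi * (al ^ 2 * mu ^ (g - 2))) = -2 * n * Nat.factorial (g - 2))
    (h_alk : ∀ k : ℕ, k ≤ g → k ≠ 2 → J (xi * (al ^ k * mu ^ (g - k))) = 0) :
    J ((xi + C (m : ℚ) * mu + C ((m : ℚ) / 2) * al + C ((m : ℚ) / 4) * et) ^ (g + 1)) =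
        (m : ℚ) ^ g * n * Nat.factorial (g + 1) / 6 ∧
      (m : ℚ) *
          J ((xi + C (m : ℚ) * mu + C ((m : ℚ) / 2) * al + C ((m : ℚ) / 4) * et) ^ (g + 1)) =
        (m : ℚ) ^ (g + 1) * n * Nat.factorial (g + 1) / 6 := by
  have hmain := main_lemma g n (m : ℚ) hg J hrel_eta hrel_aleta h_eta_mu h_al2 h_alk
  have hxp := xi_pow (m : ℚ) J hrel_xi
  have hfree := free_lemma (m : ℚ) J h_free
  have hcast : ∀ (a : ℕ) (p : MvPolynomial (Fin 4) ℚ),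
      J (p * (a : MvPolynomial (Fin 4) ℚ)) = (a : ℚ) * J p := by
    intro a p
    rw [show p * (a : MvPolynomial (Fin 4) ℚ) = (a : ℚ) • p by
      rw [smul_eq_C_mul, map_natCast (C : ℚ →+* MvPolynomial (Fin 4) ℚ)]; ring]
    rw [map_smul, smul_eq_mul]
  have key : J ((xi + C (m : ℚ) * mu + C ((m : ℚ) / 2) * al + C ((m : ℚ) / 4) * et) ^ (g + 1))
      = (m : ℚ) ^ g * n * Nat.factorial (g + 1) / 6 := by
    rw [show (xi + C (m : ℚ) * mu + C ((m : ℚ) / 2) * al + C ((m : ℚ) / 4) * et)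
        = xi + Sm (m : ℚ) by rw [Sm]; ring]
    rw [add_pow, map_sum]
    have hsub : ({2, 3} : Finset ℕ) ⊆ Finset.range (g + 1 + 1) := by
      intro x hx
      simp only [Finset.mem_insert, Finset.mem_singleton] at hx
      rcases hx with rfl | rfl <;> simp only [Finset.mem_range] <;> omega
    rw [← Finset.sum_subset hsub ?hzero]
    case hzero =>
      intro x hx hnx
      simp only [Finset.mem_insert, Finset.mem_singleton, not_or] at hnx
      simp only [Finset.mem_range] at hx
      rw [hcast]
      rcases x with _ | _ | _ | _ | x
      · rw [show xi ^ 0 * Sm (m : ℚ) ^ (g + 1 - 0)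
            = al ^ 0 * et ^ 0 * mu ^ 0 * Sm (m : ℚ) ^ (g + 1) by norm_num, hfree]
        ring
      · rw [show (1 : ℕ) = 0 + 1 by rfl, hxp]
        rw [show al ^ 0 * (xi * Sm (m : ℚ) ^ (g + 1 - (0 + 1)))
            = xi * (al ^ 0 * et ^ 0 * mu ^ 0) * Sm (m : ℚ) ^ g by
          norm_num [Nat.add_sub_cancel]]
        rw [hmain g 0 0 0 (by omega)]
        simp [Vval]
      · exact absurd rfl hnx.1
      · exact absurd rfl hnx.2
      · rw [show x + 4 = (x + 3) + 1 by rfl, hxp]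
        have hexp : g + 1 - (x + 3 + 1) = g - (x + 3) := by omega
        rw [hexp]
        rw [show al ^ (x + 3) * (xi * Sm (m : ℚ) ^ (g - (x + 3)))
            = xi * (al ^ (x + 3) * et ^ 0 * mu ^ 0) * Sm (m : ℚ) ^ (g - (x + 3)) by ring]
        have e0 : ¬(x + 3 = 0) := by omega
        have e1 : ¬(x + 3 = 1) := by omega
        have e2 : ¬(x + 3 = 2) := by omega
        rw [hmain (g - (x + 3)) (x + 3) 0 0 (by omega)]
        simp [Vval, e0, e1, e2]
    rw [Finset.sum_pair (by norm_num : (2 : ℕ) ≠ 3)]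
    rw [hcast, hcast]
    have he2 : g + 1 - 2 = g - 1 := by omega
    have he3 : g + 1 - 3 = g - 2 := by omega
    rw [show (2 : ℕ) = 1 + 1 by rfl, hxp, he2]
    rw [show al ^ 1 * (xi * Sm (m : ℚ) ^ (g - 1))
        = xi * (al ^ 1 * et ^ 0 * mu ^ 0) * Sm (m : ℚ) ^ (g - 1) by ring]
    rw [hmain (g - 1) 1 0 0 (by omega)]
    rw [show (3 : ℕ) = 2 + 1 by rfl, hxp, he3]
    rw [show al ^ 2 * (xi * Sm (m : ℚ) ^ (g - 2))
        = xi * (al ^ 2 * et ^ 0 * mu ^ 0) * Sm (m : ℚ) ^ (g - 2) by ring]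
    rw [hmain (g - 2) 2 0 0 (by omega)]
    have v2 : Vval g n (m : ℚ) 1 0 (g - 1)
        = -((n : ℚ) * (m : ℚ) ^ (g - 1) * ((g - 1 : ℕ) : ℚ) * (Nat.factorial (g - 2) : ℚ)) := by
      norm_num [Vval]
    have v3 : Vval g n (m : ℚ) 2 0 (g - 2)
        = -2 * (n : ℚ) * (m : ℚ) ^ (g - 2) * (Nat.factorial (g - 2) : ℚ) := by
      norm_num [Vval]
    rw [v2, v3]
    -- now pure arithmetic
    have c2 := Nat.choose_mul_factorial_mul_factorial (show 2 ≤ g + 1 by omega)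
    have c3 := Nat.choose_mul_factorial_mul_factorial (show 3 ≤ g + 1 by omega)
    rw [he2] at c2
    rw [he3] at c3
    have h2 : ((g + 1).choose 2 : ℚ) * 2 * (Nat.factorial (g - 1) : ℚ)
        = (Nat.factorial (g + 1) : ℚ) := by
      exact_mod_cast congrArg (Nat.cast : ℕ → ℚ) (by simpa [Nat.factorial] using c2)
    have h3 : ((g + 1).choose 3 : ℚ) * 6 * (Nat.factorial (g - 2) : ℚ)
        = (Nat.factorial (g + 1) : ℚ) := by
      exact_mod_cast congrArg (Nat.cast : ℕ → ℚ) (by simpa [Nat.factorial] using c3)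
    have hfac : (Nat.factorial (g - 1) : ℚ) = ((g : ℚ) - 1) * (Nat.factorial (g - 2)) := by
      have h1 : g - 1 = (g - 2) + 1 := by omega
      rw [h1, Nat.factorial_succ]
      have hc : ((g - 2 : ℕ) : ℚ) = (g : ℚ) - 2 := by
        have : (2 : ℕ) ≤ g := hg
        push_cast [this]; ring
      push_cast [hc]; ring
    have hgc : ((g - 1 : ℕ) : ℚ) = (g : ℚ) - 1 := by
      have : (1 : ℕ) ≤ g := by omega
      push_cast [this]; ring
    have hp1 : (m : ℚ) ^ (g - 1) * (m : ℚ) = (m : ℚ) ^ g := by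
      rw [← pow_succ]; congr 1; omega
    have hp2 : (m : ℚ) ^ (g - 2) * (m : ℚ) ^ 2 = (m : ℚ) ^ g := by
      rw [← pow_add]; congr 1; omega
    rw [hgc]
    linear_combination ((m : ℚ) * (m : ℚ) ^ (g - 1) * n / 2) * h2
      - ((m : ℚ) ^ 2 * (m : ℚ) ^ (g - 2) * n / 3) * h3
      - (((g + 1).choose 2 : ℚ) * (m : ℚ) * (m : ℚ) ^ (g - 1) * n) * hfac
      + ((n : ℚ) * (Nat.factorial (g + 1) : ℚ) / 2) * hp1
      - ((n : ℚ) * (Nat.factorial (g + 1) : ℚ) / 3) * hp2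
  refine ⟨key, ?_⟩
  rw [key, pow_succ]
  ring
end

section
/- For g ≥ 2 and n > 0, the value ∫((ξ + μ + α/2)^{g+1}) computed via the trick identity (T) with a = 1, b = 1/2 equals -(n(g+1)!/3)·((1/2)³ - (-1/2)³) = -n(g+1)!/12, and therefore ∫((ξ+μ+α/2+η/4)^{g+1}) = (g+1)·g·(1/4)·n(g-1)! - n(g+1)!/12 = n(g+1)!/4 - n(g+1)!/12 = n(g+1)!/6. -/
open MvPolynomial Finset

section helpers
variable (g n : ℕ) (J : MvPolynomial (Fin 4) ℚ →ₗ[ℚ] ℚ)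

lemma hC_lem (q : ℚ) (p : MvPolynomial (Fin 4) ℚ) : J (C q * p) = q * J p := by
  rw [← smul_eq_C_mul, map_smul, smul_eq_mul]

lemma hhalf : (C (1/2 : ℚ) : MvPolynomial (Fin 4) ℚ) + C (1/2) = 1 := by
  rw [← map_add]; norm_num

lemma hchoose (m : ℕ) : ((m.choose 2 : ℕ) : ℚ) * 2 = m * m - m := by
  induction m with
  | zero => simp
  | succ k ih =>
    rw [Nat.choose_succ_succ, Nat.choose_one_right]
    push_cast
    push_cast at ih
    nlinarith [ih]

lemma hv_eq : (mu - C (1/2 : ℚ) * al) = mu + C (-(1/2) : ℚ) * al := by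
  rw [map_neg]; ring

/-- evaluation of J(ξ μ^j (μ+bα)^m) for j+m = g -/
lemma hB (h_al2 : J (xi * (al ^ 2 * mu ^ (g - 2))) = -2 * n * Nat.factorial (g - 2))
    (h_alk : ∀ k : ℕ, k ≤ g → k ≠ 2 → J (xi * (al ^ k * mu ^ (g - k))) = 0)
    (b : ℚ) (j m : ℕ) (hjm : j + m = g) :
    J (xi * (mu ^ j * (mu + C b * al) ^ m)) =
      (m.choose 2 : ℚ) * b ^ 2 * (-2 * n * Nat.factorial (g - 2)) := by
  have hmg : m ≤ g := by omega
  have key : ∀ k, k ≤ m →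
      xi * (mu ^ j * ((C b * al) ^ k * mu ^ (m - k) * ((m.choose k : ℕ) : MvPolynomial (Fin 4) ℚ)))
        = C ((m.choose k : ℚ) * b ^ k) * (xi * (al ^ k * mu ^ (g - k))) := by
    intro k hk
    have hexp : j + (m - k) = g - k := by omega
    rw [← hexp, pow_add, ← map_natCast (C : ℚ →+* MvPolynomial (Fin 4) ℚ) (m.choose k),
      map_mul, map_pow]
    ring
  rw [add_comm mu (C b * al), add_pow, Finset.mul_sum, Finset.mul_sum, map_sum]
  rw [Finset.sum_eq_single 2]
  · by_cases h2 : 2 ≤ m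
    · rw [key 2 h2, hC_lem, h_al2]
    · interval_cases m <;> simp_all
  · intro k hk hne
    have hkm : k ≤ m := Nat.lt_succ_iff.mp (mem_range.mp hk)
    rw [key k hkm, hC_lem, h_alk k (by omega) hne, mul_zero]
  · intro h2
    have : m ≤ 1 := by simpa using h2
    interval_cases m <;> simp_all

/-- ξ-reduction: ξ(ξ+u)^i ≡ ξ(u-α)^i under J -/
lemma hL1 (hrel_xi : ∀ p, J (xi ^ 2 * p) = -J (al * xi * p)) (i : ℕ)
    (p : MvPolynomial (Fin 4) ℚ) :
    J ((xi + mu + C (1/2 : ℚ) * al) ^ i * (xi * p)) =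
      J ((mu - C (1/2 : ℚ) * al) ^ i * (xi * p)) := by
  induction i generalizing p with
  | zero => simp
  | succ k ih =>
    have e1 : (xi + mu + C (1/2 : ℚ) * al) ^ (k+1) * (xi * p) =
        xi ^ 2 * ((xi + mu + C (1/2 : ℚ) * al) ^ k * p) +
          (xi + mu + C (1/2 : ℚ) * al) ^ k * (xi * ((mu + C (1/2 : ℚ) * al) * p)) := by
      ring
    have e2 : -(al * xi * ((xi + mu + C (1/2 : ℚ) * al) ^ k * p)) +
        (xi + mu + C (1/2 : ℚ) * al) ^ k * (xi * ((mu + C (1/2 : ℚ) * al) * p)) =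
        (xi + mu + C (1/2 : ℚ) * al) ^ k * (xi * ((mu - C (1/2 : ℚ) * al) * p)) := by
      linear_combination (al * xi * p * (xi + mu + C (1/2 : ℚ) * al) ^ k) * hhalf
    rw [e1, map_add, hrel_xi, ← map_neg, ← map_add, e2, ih]
    have e4 : (mu - C (1/2 : ℚ) * al) ^ k * (xi * ((mu - C (1/2 : ℚ) * al) * p)) =
        (mu - C (1/2 : ℚ) * al) ^ (k+1) * (xi * p) := by ring
    rw [e4]

/-- η-reduction: η(μ+bα)^i ≡ ημ^i under J -/
lemma hE (hrel_aleta : ∀ p, J (al * et * p) = 0) (b : ℚ) (i : ℕ)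
    (p : MvPolynomial (Fin 4) ℚ) :
    J ((mu + C b * al) ^ i * (et * p)) = J (mu ^ i * (et * p)) := by
  induction i generalizing p with
  | zero => simp
  | succ k ih =>
    have e1 : (mu + C b * al) ^ (k+1) * (et * p) =
        (mu + C b * al) ^ k * (et * (mu * p)) + C b * (al * et * ((mu + C b * al) ^ k * p)) := by
      ring
    rw [e1, map_add, hC_lem, hrel_aleta, mul_zero, add_zero, ih]
    have e2 : mu ^ k * (et * (mu * p)) = mu ^ (k+1) * (et * p) := by ring
    rw [e2]

lemma hE' (hrel_aleta : ∀ p, J (al * et * p) = 0) (b : ℚ) (i : ℕ)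
    (p : MvPolynomial (Fin 4) ℚ) :
    J ((mu - C b * al) ^ i * (et * p)) = J (mu ^ i * (et * p)) := by
  have h : mu - C b * al = mu + C (-b) * al := by rw [map_neg]; ring
  rw [h, hE J hrel_aleta]

/-- ξ-free and η-free top classes integrate to 0 -/
lemma hZ (h_free : ∀ a b c : ℕ, J (mu ^ a * al ^ b * et ^ c) = 0) (b : ℚ) (m : ℕ) :
    J ((mu + C b * al) ^ m) = 0 := by
  rw [add_comm, add_pow, map_sum]
  apply Finset.sum_eq_zero
  intro k hk
  have e : (C b * al) ^ k * mu ^ (m - k) * ((m.choose k : ℕ) : MvPolynomial (Fin 4) ℚ)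
      = C (b ^ k * (m.choose k : ℚ)) * (mu ^ (m - k) * al ^ k * et ^ 0) := by
    rw [pow_zero, ← map_natCast (C : ℚ →+* MvPolynomial (Fin 4) ℚ) (m.choose k),
      map_mul, map_pow]
    ring
  rw [e, hC_lem, h_free, mul_zero]

/-- the recursion: J(ξ μ^{g-m} Σ_{i≤m} v^i u^{m-i}) = -(n(g-2)!)(m³-m)/12 -/
lemma hM (hg : 2 ≤ g)
    (h_al2 : J (xi * (al ^ 2 * mu ^ (g - 2))) = -2 * n * Nat.factorial (g - 2))
    (h_alk : ∀ k : ℕ, k ≤ g → k ≠ 2 → J (xi * (al ^ k * mu ^ (g - k))) = 0) :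
    ∀ m, m ≤ g →
    J (xi * (mu ^ (g - m) *
        ∑ i ∈ range (m + 1), (mu - C (1/2 : ℚ) * al) ^ i * (mu + C (1/2 : ℚ) * al) ^ (m - i))) =
      -(n * Nat.factorial (g - 2)) * ((m : ℚ) ^ 3 - m) / 12 := by
  intro m
  induction m with
  | zero =>
    intro _
    have h0 := h_alk 0 (by omega) (by omega)
    simp only [pow_zero, one_mul, Nat.sub_zero] at h0
    simp [h0]
  | succ m ih =>
    intro hm1
    have ihv := ih (by omega)
    have eS : (∑ i ∈ range (m + 1 + 1),
          (mu - C (1/2 : ℚ) * al) ^ i * (mu + C (1/2 : ℚ) * al) ^ (m + 1 - i)) =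
        (mu + C (1/2 : ℚ) * al) ^ (m + 1) +
          (mu - C (1/2 : ℚ) * al) *
            ∑ i ∈ range (m + 1), (mu - C (1/2 : ℚ) * al) ^ i * (mu + C (1/2 : ℚ) * al) ^ (m - i) := by
      rw [Finset.sum_range_succ', Finset.mul_sum]
      simp only [Nat.succ_sub_succ, pow_zero, one_mul, Nat.sub_zero]
      rw [add_comm]
      congr 1
      exact Finset.sum_congr rfl fun i _ => by ring
    have hvu : (mu - C (1/2 : ℚ) * al) - (mu + C (1/2 : ℚ) * al) = -al := by
      linear_combination (-al) * hhalf
    have g2 := geom_sum₂_mul (mu - C (1/2 : ℚ) * al) (mu + C (1/2 : ℚ) * al) (m + 1)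
    rw [hvu] at g2
    simp only [Nat.add_sub_cancel] at g2
    have eA : al * (∑ i ∈ range (m + 1),
          (mu - C (1/2 : ℚ) * al) ^ i * (mu + C (1/2 : ℚ) * al) ^ (m - i)) =
        (mu + C (1/2 : ℚ) * al) ^ (m + 1) - (mu - C (1/2 : ℚ) * al) ^ (m + 1) := by
      linear_combination (-1 : MvPolynomial (Fin 4) ℚ) * g2
    have hmu : mu ^ (g - m) = mu ^ (g - (m + 1)) * mu := by
      rw [← pow_succ]
      congr 1
      omega
    have eMain : xi * (mu ^ (g - (m + 1)) *
          ∑ i ∈ range (m + 1 + 1),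
            (mu - C (1/2 : ℚ) * al) ^ i * (mu + C (1/2 : ℚ) * al) ^ (m + 1 - i)) =
        xi * (mu ^ (g - m) *
            ∑ i ∈ range (m + 1), (mu - C (1/2 : ℚ) * al) ^ i * (mu + C (1/2 : ℚ) * al) ^ (m - i))
          + xi * (mu ^ (g - (m + 1)) * (mu + C (1/2 : ℚ) * al) ^ (m + 1))
          - C (1/2 : ℚ) * (xi * (mu ^ (g - (m + 1)) * (mu + C (1/2 : ℚ) * al) ^ (m + 1)))
          + C (1/2 : ℚ) * (xi * (mu ^ (g - (m + 1)) * (mu - C (1/2 : ℚ) * al) ^ (m + 1))) := by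
      rw [eS, hmu]
      linear_combination (-(C (1/2 : ℚ) * xi * mu ^ (g - (m + 1)))) * eA
    rw [eMain, map_add, map_sub, map_add, hC_lem, hC_lem, ihv,
      hB g n J h_al2 h_alk (1/2) (g - (m + 1)) (m + 1) (by omega), hv_eq,
      hB g n J h_al2 h_alk (-(1/2)) (g - (m + 1)) (m + 1) (by omega)]
    have hch := hchoose (m + 1)
    push_cast at hch ⊢
    linear_combination (-((n : ℚ) * (Nat.factorial (g - 2) : ℚ)) / 4) * hch
lemma hfact3' (hg : 2 ≤ g) : (Nat.factorial (g + 1) : ℚ) =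
    (Nat.factorial (g - 2) : ℚ) * ((g : ℚ) ^ 3 - (g : ℚ)) := by
  obtain ⟨k, rfl⟩ : ∃ k, g = k + 2 := ⟨g - 2, by omega⟩
  have e : Nat.factorial (k + 3) = ((k+3) * ((k+2) * ((k+1) * Nat.factorial k))) := rfl
  have e2 : k + 2 + 1 = k + 3 := by omega
  have e3 : k + 2 - 2 = k := by omega
  rw [e2, e3, e]
  push_cast
  ring

lemma hfact2' (hg : 2 ≤ g) : (Nat.factorial (g + 1) : ℚ) =
    ((g : ℚ) + 1) * (g : ℚ) * (Nat.factorial (g - 1) : ℚ) := by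
  obtain ⟨k, rfl⟩ : ∃ k, g = k + 2 := ⟨g - 2, by omega⟩
  have e : Nat.factorial (k + 3) = ((k+3) * ((k+2) * Nat.factorial (k+1))) := rfl
  have e2 : k + 2 + 1 = k + 3 := by omega
  have e3 : k + 2 - 1 = k + 1 := by omega
  rw [e2, e3, e]
  push_cast
  ring
end helpers

/-- Via the trick (T) with a = 1, b = 1/2 one has
∫((ξ + μ + α/2)^{g+1}) = -n(g+1)!/12, and therefore
∫((ξ + μ + α/2 + η/4)^{g+1}) = n(g+1)!/4 - n(g+1)!/12 = n(g+1)!/6. -/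
theorem stmt_17 (g n : ℕ) (hg : 2 ≤ g) (hn : 0 < n)
    (J : MvPolynomial (Fin 4) ℚ →ₗ[ℚ] ℚ)
    (hrel_eta : ∀ p, J (et ^ 2 * p) = 0)
    (hrel_aleta : ∀ p, J (al * et * p) = 0)
    (hrel_xi : ∀ p, J (xi ^ 2 * p) = -J (al * xi * p))
    (h_free : ∀ a b c : ℕ, J (mu ^ a * al ^ b * et ^ c) = 0)
    (h_eta_mu : J (xi * (et * mu ^ (g - 1))) = n * Nat.factorial (g - 1))
    (h_al2 : J (xi * (al ^ 2 * mu ^ (g - 2))) = -2 * n * Nat.factorial (g - 2))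
    (h_alk : ∀ k : ℕ, k ≤ g → k ≠ 2 → J (xi * (al ^ k * mu ^ (g - k))) = 0) :
    J ((xi + mu + C (1 / 2 : ℚ) * al) ^ (g + 1)) =
        -(n * Nat.factorial (g + 1) : ℚ) / 12 ∧
      J ((xi + mu + C (1 / 2 : ℚ) * al + C (1 / 4 : ℚ) * et) ^ (g + 1)) =
        n * Nat.factorial (g + 1) / 4 - n * Nat.factorial (g + 1) / 12 ∧
      (n * Nat.factorial (g + 1) : ℚ) / 4 - n * Nat.factorial (g + 1) / 12 =
        n * Nat.factorial (g + 1) / 6 := by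
  have hfact3 := hfact3' g hg
  have hfact2 := hfact2' g hg
  -- Part 1 : J (A^{g+1})
  have g2 := geom_sum₂_mul (xi + mu + C (1/2 : ℚ) * al) (mu + C (1/2 : ℚ) * al) (g + 1)
  have hAu : (xi + mu + C (1/2 : ℚ) * al) - (mu + C (1/2 : ℚ) * al) = xi := by ring
  rw [hAu] at g2
  simp only [Nat.add_sub_cancel] at g2
  have hA : (xi + mu + C (1/2 : ℚ) * al) ^ (g + 1) =
      (mu + C (1/2 : ℚ) * al) ^ (g + 1) +
        ∑ i ∈ range (g + 1),
          (xi + mu + C (1/2 : ℚ) * al) ^ i * (mu + C (1/2 : ℚ) * al) ^ (g - i) * xi := by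
    rw [← Finset.sum_mul]
    linear_combination (-1 : MvPolynomial (Fin 4) ℚ) * g2
  have hterm : ∀ i ∈ range (g + 1),
      J ((xi + mu + C (1/2 : ℚ) * al) ^ i * (mu + C (1/2 : ℚ) * al) ^ (g - i) * xi) =
        J (xi * ((mu - C (1/2 : ℚ) * al) ^ i * (mu + C (1/2 : ℚ) * al) ^ (g - i))) := by
    intro i _
    have e : (xi + mu + C (1/2 : ℚ) * al) ^ i * (mu + C (1/2 : ℚ) * al) ^ (g - i) * xi =
        (xi + mu + C (1/2 : ℚ) * al) ^ i * (xi * (mu + C (1/2 : ℚ) * al) ^ (g - i)) := by ring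
    rw [e, hL1 J hrel_xi]
    congr 1
    ring
  have hMg := hM g n J (by omega) h_al2 h_alk g le_rfl
  rw [Nat.sub_self, pow_zero, one_mul, Finset.mul_sum, map_sum] at hMg
  have part1 : J ((xi + mu + C (1/2 : ℚ) * al) ^ (g + 1)) =
      -((n : ℚ) * Nat.factorial (g + 1)) / 12 := by
    rw [hA, map_add, hZ J h_free, map_sum, Finset.sum_congr rfl hterm, hMg, zero_add,
      hfact3]
    ring
  -- J(A^g * et)
  have g3 := geom_sum₂_mul (xi + mu + C (1/2 : ℚ) * al) (mu + C (1/2 : ℚ) * al) g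
  rw [hAu] at g3
  have hAg : (xi + mu + C (1/2 : ℚ) * al) ^ g * et =
      (mu + C (1/2 : ℚ) * al) ^ g * et +
        ∑ i ∈ range g,
          (xi + mu + C (1/2 : ℚ) * al) ^ i * (mu + C (1/2 : ℚ) * al) ^ (g - 1 - i) * xi * et := by
    rw [← Finset.sum_mul, ← Finset.sum_mul]
    linear_combination (-et) * g3
  have hZe : J ((mu + C (1/2 : ℚ) * al) ^ g * et) = 0 := by
    have e : (mu + C (1/2 : ℚ) * al) ^ g * et = (mu + C (1/2 : ℚ) * al) ^ g * (et * 1) := by ring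
    rw [e, hE J hrel_aleta]
    have e2 : mu ^ g * (et * 1) = mu ^ g * al ^ 0 * et ^ 1 := by
      rw [pow_zero, pow_one]; ring
    rw [e2, h_free]
  have hterm2 : ∀ i ∈ range g,
      J ((xi + mu + C (1/2 : ℚ) * al) ^ i * (mu + C (1/2 : ℚ) * al) ^ (g - 1 - i) * xi * et) =
        (n : ℚ) * Nat.factorial (g - 1) := by
    intro i hi
    have hi' : i < g := mem_range.mp hi
    have e : (xi + mu + C (1/2 : ℚ) * al) ^ i * (mu + C (1/2 : ℚ) * al) ^ (g - 1 - i) * xi * et =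
        (xi + mu + C (1/2 : ℚ) * al) ^ i * (xi * ((mu + C (1/2 : ℚ) * al) ^ (g - 1 - i) * et)) := by
      ring
    rw [e, hL1 J hrel_xi]
    have e2 : (mu - C (1/2 : ℚ) * al) ^ i * (xi * ((mu + C (1/2 : ℚ) * al) ^ (g - 1 - i) * et)) =
        (mu - C (1/2 : ℚ) * al) ^ i * (et * (xi * (mu + C (1/2 : ℚ) * al) ^ (g - 1 - i))) := by
      ring
    rw [e2, hE' J hrel_aleta]
    have e3 : mu ^ i * (et * (xi * (mu + C (1/2 : ℚ) * al) ^ (g - 1 - i))) =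
        (mu + C (1/2 : ℚ) * al) ^ (g - 1 - i) * (et * (xi * mu ^ i)) := by ring
    rw [e3, hE J hrel_aleta]
    have hexp : (g - 1 - i) + i = g - 1 := by omega
    have e4 : mu ^ (g - 1 - i) * (et * (xi * mu ^ i)) = xi * (et * mu ^ ((g - 1 - i) + i)) := by
      rw [pow_add]; ring
    rw [e4, hexp, h_eta_mu]
  have hAgEt : J ((xi + mu + C (1/2 : ℚ) * al) ^ g * et) =
      (g : ℚ) * ((n : ℚ) * Nat.factorial (g - 1)) := by
    rw [hAg, map_add, hZe, zero_add, map_sum, Finset.sum_congr rfl hterm2,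
      Finset.sum_const, card_range, nsmul_eq_mul]
  -- Part 2
  have part2 : J ((xi + mu + C (1/2 : ℚ) * al + C (1/4 : ℚ) * et) ^ (g + 1)) =
      (n : ℚ) * Nat.factorial (g + 1) / 4 - (n : ℚ) * Nat.factorial (g + 1) / 12 := by
    rw [add_pow, map_sum, Finset.sum_range_succ, Finset.sum_range_succ]
    have hzero : ∀ kk ∈ range g,
        J ((xi + mu + C (1/2 : ℚ) * al) ^ kk *
            (C (1/4 : ℚ) * et) ^ (g + 1 - kk) *
            (((g + 1).choose kk : ℕ) : MvPolynomial (Fin 4) ℚ)) = 0 := by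
      intro kk hkk
      have hkk' : kk < g := mem_range.mp hkk
      have hj : g + 1 - kk = (g + 1 - kk - 2) + 2 := by omega
      rw [hj]
      generalize g + 1 - kk - 2 = j
      have e : (xi + mu + C (1/2 : ℚ) * al) ^ kk * (C (1/4 : ℚ) * et) ^ (j + 2) *
            (((g + 1).choose kk : ℕ) : MvPolynomial (Fin 4) ℚ) =
          et ^ 2 * (C ((1/4 : ℚ) ^ (j + 2) * ((g + 1).choose kk : ℚ)) *
            ((xi + mu + C (1/2 : ℚ) * al) ^ kk * et ^ j)) := by
        rw [mul_pow, ← map_pow (C : ℚ →+* MvPolynomial (Fin 4) ℚ) (1/4),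
          ← map_natCast (C : ℚ →+* MvPolynomial (Fin 4) ℚ) ((g + 1).choose kk), map_mul,
          pow_add et]
        ring
      rw [e, hrel_eta]
    rw [Finset.sum_eq_zero hzero, zero_add]
    -- k = g term
    have hg1 : g + 1 - g = 1 := by omega
    have eg : (xi + mu + C (1/2 : ℚ) * al) ^ g * (C (1/4 : ℚ) * et) ^ (g + 1 - g) *
          (((g + 1).choose g : ℕ) : MvPolynomial (Fin 4) ℚ) =
        C ((1/4 : ℚ) * ((g : ℚ) + 1)) * ((xi + mu + C (1/2 : ℚ) * al) ^ g * et) := by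
      rw [hg1, pow_one, Nat.choose_succ_self_right,
        ← map_natCast (C : ℚ →+* MvPolynomial (Fin 4) ℚ) (g + 1), map_mul]
      push_cast
      ring
    -- k = g+1 term
    have eg1 : (xi + mu + C (1/2 : ℚ) * al) ^ (g + 1) * (C (1/4 : ℚ) * et) ^ (g + 1 - (g + 1)) *
          (((g + 1).choose (g + 1) : ℕ) : MvPolynomial (Fin 4) ℚ) =
        (xi + mu + C (1/2 : ℚ) * al) ^ (g + 1) := by
      rw [Nat.sub_self, pow_zero, Nat.choose_self]
      simp
    rw [eg, eg1, hC_lem, hAgEt, part1, hfact2]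
    push_cast
    ring
  refine ⟨?_, ?_, by ring⟩
  · rw [part1]
  · rw [part2]
end
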